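/- arXiv:1607.02614 — 7 statements merged into one kernel-verified Lean document; each statement's English description precedes it below -/
import Mathlib

section
/- Let k ≥ 3 be odd, and let p be a prime with p ≡ 1 (mod 4k). Then there are no integers x, y, z (positive or negative) with x² + y² + z^k = p^k and z ≡ 2k (mod 4k). -/
/-!
Write `x² + y² = p^k - z^k = (p - z) · S` with `S = ∑ pⁱ z^(k-1-i)`. Since `k` is odd,
`d = p - z ≡ 1 - 2k ≡ 3 (mod 4)`, so some prime `q ≡ 3 (mod 4)` divides `d` to an odd power, and by
the two-squares theorem `q` must also divide `S`. But modulo `q` we have `z ≡ p`, hence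
`S ≡ k p^(k-1)`; and `q ∤ k` because `d ≡ 1 (mod k)`, while `q ∤ p` because `p ≡ 1 (mod 4)`.
-/

open Finset

theorem Nat.sq_add_sq_mod_four_ne_three (x y : ℕ) : (x ^ 2 + y ^ 2) % 4 ≠ 3 := by
  rw [Nat.add_mod, Nat.pow_mod, Nat.pow_mod y]
  have hx := Nat.mod_lt x four_pos
  have hy := Nat.mod_lt y four_pos
  interval_cases x % 4 <;> interval_cases y % 4 <;> decide

theorem Nat.exists_prime_mod_four_eq_three_odd_padicValNat {n : ℕ} (hn : n % 4 = 3) :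
    ∃ q : ℕ, q.Prime ∧ q % 4 = 3 ∧ Odd (padicValNat q n) := by
  by_contra! h
  obtain ⟨x, y, rfl⟩ : ∃ x y, n = x ^ 2 + y ^ 2 := Nat.eq_sq_add_sq_iff.mpr fun q hq hq4 ↦
    Nat.not_odd_iff_even.mp (h q (Nat.prime_of_mem_primeFactors hq) hq4)
  exact Nat.sq_add_sq_mod_four_ne_three x y hn

theorem Nat.exists_prime_mod_four_eq_three_dvd_of_mul_eq_sq_add_sq {a b x y : ℕ}
    (ha : a % 4 = 3) (h : a * b = x ^ 2 + y ^ 2) :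
    ∃ q : ℕ, q.Prime ∧ q % 4 = 3 ∧ q ∣ a ∧ q ∣ b := by
  obtain ⟨q, hq, hq4, hodd⟩ := Nat.exists_prime_mod_four_eq_three_odd_padicValNat ha
  have hqa : q ∣ a := by
    by_contra hqa
    simp [padicValNat.eq_zero_of_not_dvd hqa] at hodd
  refine ⟨q, hq, hq4, hqa, ?_⟩
  by_contra hqb
  have ha0 : a ≠ 0 := by omega
  have hb0 : b ≠ 0 := by rintro rfl; exact hqb (dvd_zero q)
  have heven : Even (padicValNat q (a * b)) :=
    Nat.eq_sq_add_sq_iff.mp ⟨x, y, h⟩ q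
      (Nat.mem_primeFactors.mpr ⟨hq, hqa.mul_right b, Nat.mul_ne_zero ha0 hb0⟩) hq4
  have : Fact q.Prime := ⟨hq⟩
  rw [padicValNat.mul ha0 hb0, padicValNat.eq_zero_of_not_dvd hqb, add_zero] at heven
  exact Nat.not_even_iff_odd.mpr hodd heven

theorem Int.exists_prime_mod_four_eq_three_dvd_of_mul_eq_sq_add_sq {a b x y : ℤ}
    (ha : 0 < a) (ha4 : a % 4 = 3) (h : a * b = x ^ 2 + y ^ 2) :
    ∃ q : ℕ, q.Prime ∧ q % 4 = 3 ∧ (q : ℤ) ∣ a ∧ (q : ℤ) ∣ b := by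
  have hb : 0 ≤ b := nonneg_of_mul_nonneg_right (h ▸ by positivity) ha
  lift a to ℕ using ha.le
  lift b to ℕ using hb
  have h' : a * b = x.natAbs ^ 2 + y.natAbs ^ 2 := by
    zify; rw [sq_abs, sq_abs]; exact h
  obtain ⟨q, hq, hq4, hqa, hqb⟩ :=
    Nat.exists_prime_mod_four_eq_three_dvd_of_mul_eq_sq_add_sq (by omega) h'
  exact ⟨q, hq, hq4, Int.natCast_dvd_natCast.mpr hqa, Int.natCast_dvd_natCast.mpr hqb⟩

theorem no_rep_odd_k_general (k : ℕ) (hk : Odd k) (p : ℕ) (hp : p.Prime)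
    (hp1 : (p : ℤ) ≡ 1 [ZMOD (4 * k)]) :
    ¬ ∃ x y z : ℤ, z ≡ 2 * k [ZMOD (4 * k)] ∧ x ^ 2 + y ^ 2 + z ^ k = (p : ℤ) ^ k := by
  rintro ⟨x, y, z, hz, heq⟩
  have hd : (p : ℤ) - z ≡ 1 - 2 * k [ZMOD (4 * k)] := hp1.sub hz
  have hd4 : ((p : ℤ) - z) % 4 = 3 := by
    have := hd.of_dvd (dvd_mul_right 4 (k : ℤ))
    obtain ⟨j, rfl⟩ := hk
    unfold Int.ModEq at this
    push_cast at this
    omega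
  have hdk : (p : ℤ) - z ≡ 1 [ZMOD k] :=
    (hd.of_dvd (dvd_mul_left (k : ℤ) 4)).trans (Int.modEq_iff_dvd.mpr ⟨2, by ring⟩)
  have hzp : z < p := by
    have hle : z ≤ p := hk.strictMono_pow.le_iff_le.mp (by nlinarith [sq_nonneg x, sq_nonneg y])
    exact hle.lt_of_ne (by rintro rfl; simp at hd4)
  have hfact : ((p : ℤ) - z) * ∑ i ∈ range k, (p : ℤ) ^ i * z ^ (k - 1 - i) = x ^ 2 + y ^ 2 := by
    rw [mul_comm, geom_sum₂_mul]
    linarith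
  obtain ⟨q, hq, hq4, hqd, hqS⟩ :=
    Int.exists_prime_mod_four_eq_three_dvd_of_mul_eq_sq_add_sq (by omega) hd4 hfact
  rw [dvd_geom_sum₂_iff_of_dvd_sub' hqd] at hqS
  have hq' : Prime (q : ℤ) := Nat.prime_iff_prime_int.mp hq
  rcases hq'.dvd_or_dvd hqS with hqk | hqp
  · have h10 : 1 ≡ 0 [ZMOD q] := (hdk.of_dvd hqk).symm.trans (Int.modEq_zero_iff_dvd.mpr hqd)
    exact hq'.not_dvd_one (Int.modEq_zero_iff_dvd.mp h10)
  · obtain rfl : q = p := (Nat.prime_dvd_prime_iff_eq hq hp).mp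
      (Int.natCast_dvd_natCast.mp (hq'.dvd_of_dvd_pow hqp))
    have := hp1.of_dvd (dvd_mul_right 4 (k : ℤ))
    unfold Int.ModEq at this
    omega

theorem no_rep_odd_k (k : ℕ) (hk : Odd k) (hk3 : 3 ≤ k) (p : ℕ) (hp : p.Prime)
    (hp1 : (p : ℤ) ≡ 1 [ZMOD (4 * k)]) :
    ¬ ∃ x y z : ℤ, z ≡ 2 * k [ZMOD (4 * k)] ∧ x ^ 2 + y ^ 2 + z ^ k = (p : ℤ) ^ k :=
  no_rep_odd_k_general k hk p hp hp1
end

section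
/- Let p be a prime with p ≡ 1 (mod 36). Then there are no integers x, y, z with x² + y² + z⁹ = p⁹ and z ≡ 18 (mod 36). -/
/-!
Write `p⁹ - z⁹ = (p - z) · B` with `B = ∑ pⁱ z⁸⁻ⁱ`. Modulo `p - z` we have `B ≡ 9 p⁸`, so a prime
dividing both factors is `3` or `p`; the congruences rule out both, since `p - z ≡ 19 (mod 36)` and
`p ≡ 1 (mod 4)`. Hence every prime `q ≡ 3 (mod 4)` occurs in `p - z` to the same (even) power as in
the sum of two squares `x² + y²`, so `p - z` is itself a sum of two squares. But `p - z ≡ 3 (mod 4)`.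
-/

open Finset

theorem Nat.eq_sq_add_sq_of_mul_eq_sq_add_sq {a b x y : ℕ} (hb : b ≠ 0)
    (h : a * b = x ^ 2 + y ^ 2) (hcop : ∀ q, q.Prime → q % 4 = 3 → q ∣ a → ¬ q ∣ b) :
    ∃ u v, a = u ^ 2 + v ^ 2 := by
  rcases eq_or_ne a 0 with rfl | ha
  · exact ⟨0, 0, rfl⟩
  refine Nat.eq_sq_add_sq_iff.mpr fun q hqa hq3 ↦ ?_
  have hq := Nat.prime_of_mem_primeFactors hqa
  have : Fact q.Prime := ⟨hq⟩
  have hqab : q ∈ (a * b).primeFactors :=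
    Nat.mem_primeFactors.mpr ⟨hq, (Nat.dvd_of_mem_primeFactors hqa).mul_right b, mul_ne_zero ha hb⟩
  have hEven := Nat.eq_sq_add_sq_iff.mp ⟨x, y, h⟩ q hqab hq3
  rwa [padicValNat.mul ha hb,
    padicValNat.eq_zero_of_not_dvd (hcop q hq hq3 (Nat.dvd_of_mem_primeFactors hqa)), add_zero]
    at hEven

theorem Int.emod_four_ne_three_of_mul_eq_sq_add_sq {a b x y : ℤ} (ha : 0 ≤ a) (hb : 0 < b)
    (h : a * b = x ^ 2 + y ^ 2)
    (hcop : ∀ q : ℕ, q.Prime → q % 4 = 3 → (q : ℤ) ∣ a → ¬ (q : ℤ) ∣ b) : a % 4 ≠ 3 := by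
  lift a to ℕ using ha
  lift b to ℕ using hb.le
  have hnat : a * b = x.natAbs ^ 2 + y.natAbs ^ 2 := by
    zify
    simpa only [sq_abs] using h
  obtain ⟨u, v, rfl⟩ := Nat.eq_sq_add_sq_of_mul_eq_sq_add_sq (by omega) hnat
    fun q hq hq3 hqa hqb ↦ hcop q hq hq3 (by exact_mod_cast hqa) (by exact_mod_cast hqb)
  have := Nat.sq_add_sq_mod_four_ne_three u v
  omega

theorem no_rep_k9 (p : ℕ) (hp : p.Prime) (hp1 : (p : ℤ) ≡ 1 [ZMOD 36]) :
    ¬ ∃ x y z : ℤ, z ≡ 18 [ZMOD 36] ∧ x ^ 2 + y ^ 2 + z ^ 9 = (p : ℤ) ^ 9 := by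
  rintro ⟨x, y, z, hz, h⟩
  unfold Int.ModEq at hp1 hz
  have hodd : Odd 9 := by decide
  have hzp : z < p := by
    refine lt_of_le_of_ne (hodd.pow_le_pow.mp ?_) (by omega)
    nlinarith [sq_nonneg x, sq_nonneg y]
  have hAB : (p - z) * ∑ i ∈ range 9, (p : ℤ) ^ i * z ^ (9 - 1 - i) = x ^ 2 + y ^ 2 := by
    rw [mul_comm, geom_sum₂_mul]
    linarith
  have hB : 0 < ∑ i ∈ range 9, (p : ℤ) ^ i * z ^ (9 - 1 - i) := by
    refine pos_of_mul_pos_right (a := (p : ℤ) - z) ?_ (by omega)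
    rw [mul_comm, geom_sum₂_mul, sub_pos]
    exact hodd.pow_lt_pow.mpr hzp
  refine Int.emod_four_ne_three_of_mul_eq_sq_add_sq (by omega) hB hAB ?_ (by omega)
  intro q hq hq3 hqA hqB
  have hq9p : q ∣ 9 * p ^ 8 := by
    exact_mod_cast (dvd_geom_sum₂_iff_of_dvd_sub' hqA).mp hqB
  rcases hq.dvd_mul.mp hq9p with hq9 | hqp
  · have : q = 3 := (Nat.prime_dvd_prime_iff_eq hq Nat.prime_three).mp
      (hq.dvd_of_dvd_pow (show q ∣ 3 ^ 2 from hq9))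
    subst this
    omega
  · have : q = p := (Nat.prime_dvd_prime_iff_eq hq hp).mp (hq.dvd_of_dvd_pow hqp)
    subst this
    omega
end

section
/- Suppose 4 divides k, and let p be a prime with p ≡ 7 (mod 8). Let n be a positive integer with n ≡ 1 (mod 8), n < p, such that n = 1 or every prime factor of n is ≡ 1 (mod 4). Then there are no positive integers x, y, z with x² + y² + z^k = (n·p)². -/
lemma aux_dvd_of_dvd_sq_add_sq {q x y : ℕ} (hq : q.Prime) (h3 : q % 4 = 3)
    (h : q ∣ x ^ 2 + y ^ 2) : q ∣ x ∧ q ∣ y := by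
  haveI : Fact q.Prime := ⟨hq⟩
  have hcast : ((x : ZMod q) ^ 2 + (y : ZMod q) ^ 2 = 0) := by
    have := (ZMod.natCast_eq_zero_iff (x ^ 2 + y ^ 2) q).mpr h
    push_cast at this
    exact this
  have hy : (y : ZMod q) = 0 := by
    by_contra hy
    have hxy' : (x : ZMod q) ^ 2 = -(y : ZMod q) ^ 2 := by linear_combination hcast
    exact (ZMod.mod_four_ne_three_of_sq_eq_neg_sq' hy hxy') h3
  have hx : (x : ZMod q) = 0 := by
    have h2 : (x : ZMod q) ^ 2 = 0 := by rw [hy] at hcast; simpa using hcast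
    exact pow_eq_zero_iff (by norm_num) |>.mp h2
  exact ⟨(ZMod.natCast_eq_zero_iff x q).mp hx,
    (ZMod.natCast_eq_zero_iff y q).mp hy⟩

lemma aux_exists_prime_three_mod_four : ∀ A : ℕ, A % 4 = 3 →
    ∃ q, q.Prime ∧ q % 4 = 3 ∧ q ∣ A := by
  intro A
  induction A using Nat.strong_induction_on with
  | _ A ih =>
    intro hA
    have hq := Nat.minFac_prime (by omega : A ≠ 1)
    set q := A.minFac with hqdef
    have hqd : q ∣ A := Nat.minFac_dvd A
    have hA2 : A % 2 = 1 := by omega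
    have hq2 : q % 2 = 1 := by
      rcases hq.eq_two_or_odd with h | h
      · exfalso; rw [h] at hqd; omega
      · exact h
    rcases (by omega : q % 4 = 1 ∨ q % 4 = 3) with h1 | h3
    · obtain ⟨c, hc⟩ := hqd
      have hc4 : c % 4 = 3 := by
        have := Nat.mul_mod q c 4
        rw [← hc, hA, h1] at this
        omega
      have hclt : c < A := by
        have hq2' : 2 ≤ q := hq.two_le
        have hc0 : 0 < c := by
          rcases Nat.eq_zero_or_pos c with h | h
          · exfalso; rw [h, mul_zero] at hc; omega
          · exact h
        have := hq.two_le
        nlinarith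
      obtain ⟨q', hq', hq3', hqd'⟩ := ih c hclt hc4
      exact ⟨q', hq', hq3', hqd'.trans ⟨q, by rw [hc]; ring⟩⟩
    · exact ⟨q, hq, h3, hqd⟩

lemma aux_descent : ∀ A : ℕ, A % 4 = 3 → ∀ B x y : ℕ, 0 < B →
    x ^ 2 + y ^ 2 = A * B →
    (∀ q : ℕ, q.Prime → q % 4 = 3 → q ∣ A → ¬ q ∣ B) → False := by
  intro A
  induction A using Nat.strong_induction_on with
  | _ A ih =>
    intro hA B x y hB hxy hcond
    obtain ⟨q, hq, hq3, hqA⟩ := aux_exists_prime_three_mod_four A hA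
    have hqB : ¬ q ∣ B := hcond q hq hq3 hqA
    have hqxy : q ∣ x ^ 2 + y ^ 2 := hxy ▸ hqA.mul_right B
    obtain ⟨hqx, hqy⟩ := aux_dvd_of_dvd_sq_add_sq hq hq3 hqxy
    obtain ⟨x', rfl⟩ := hqx
    obtain ⟨y', rfl⟩ := hqy
    have hq2A : q ^ 2 ∣ A * B := by
      rw [← hxy]; exact ⟨x' ^ 2 + y' ^ 2, by ring⟩
    have hcop : Nat.Coprime (q ^ 2) B :=
      ((Nat.Prime.coprime_iff_not_dvd hq).mpr hqB).pow_left 2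
    have hq2A' : q ^ 2 ∣ A := hcop.dvd_of_dvd_mul_right hq2A
    obtain ⟨A', hA'⟩ := hq2A'
    have hq4 : q ^ 2 % 4 = 1 := by
      rw [Nat.pow_mod, hq3]
    have hA'4 : A' % 4 = 3 := by
      have := Nat.mul_mod (q ^ 2) A' 4
      rw [← hA', hA, hq4] at this
      omega
    have hA'pos : 0 < A' := by
      rcases Nat.eq_zero_or_pos A' with h | h
      · exfalso; rw [h, mul_zero] at hA'; omega
      · exact h
    have hA'lt : A' < A := by
      rw [hA']
      calc A' = 1 * A' := (one_mul _).symm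
      _ < q ^ 2 * A' := (Nat.mul_lt_mul_right hA'pos).mpr (by nlinarith [hq.two_le])
    have hxy' : x' ^ 2 + y' ^ 2 = A' * B := by
      have h2 : q ^ 2 * (x' ^ 2 + y' ^ 2) = q ^ 2 * (A' * B) := by
        rw [← mul_assoc, ← hA', ← hxy]; try ring
      exact Nat.eq_of_mul_eq_mul_left (pow_pos hq.pos 2) h2
    exact ih A' hA'lt hA'4 B x' y' hB hxy' fun q' h1 h2 h3 =>
      hcond q' h1 h2 (h3.trans ⟨q ^ 2, by rw [hA']; ring⟩)

theorem no_rep_four_dvd_k (k : ℕ) (hk : 4 ∣ k) (p : ℕ) (hp : p.Prime) (hp7 : p % 8 = 7)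
    (n : ℕ) (hn : 0 < n) (hn1 : n % 8 = 1) (hnp : n < p)
    (hnfac : n = 1 ∨ ∀ q : ℕ, q.Prime → q ∣ n → q % 4 = 1) :
    ¬ ∃ x y z : ℕ, 0 < x ∧ 0 < y ∧ 0 < z ∧ x ^ 2 + y ^ 2 + z ^ k = (n * p) ^ 2 := by
  rintro ⟨x, y, z, hx, hy, hz, heq⟩
  obtain ⟨m, rfl⟩ := hk
  set s : ℕ := z ^ m with hs
  set t : ℕ := s ^ 2 with hts
  set N : ℕ := n * p with hN
  have hre : z ^ (4 * m) = t ^ 2 := by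
    rw [hts, hs, show 4 * m = m * 2 * 2 by ring, pow_mul, pow_mul]
  rw [hre] at heq
  have hxypos : 0 < x ^ 2 + y ^ 2 := by positivity
  have htN : t < N := by
    have h1 : t ^ 2 < N ^ 2 := by omega
    exact lt_of_pow_lt_pow_left₀ 2 (Nat.zero_le N) h1
  have hN8 : N % 8 = 7 := by rw [hN, Nat.mul_mod, hn1, hp7]
  have heqZ : (x : ℤ) ^ 2 + (y : ℤ) ^ 2 + (t : ℤ) ^ 2 = (N : ℤ) ^ 2 := by
    exact_mod_cast heq
  have hfac : x ^ 2 + y ^ 2 = (N - t) * (N + t) := by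
    zify [htN.le]
    linear_combination heqZ
  -- common argument: a prime q ≡ 3 mod 4 cannot divide both N - t and N + t
  have hkey : ∀ q : ℕ, q.Prime → q % 4 = 3 → q ∣ N - t → q ∣ N + t → False := by
    intro q hq hq3 hd1 hd2
    have h2N : q ∣ 2 * N := by
      have := Nat.dvd_add hd1 hd2
      rwa [show N - t + (N + t) = 2 * N by omega] at this
    have h2t : q ∣ 2 * t := by
      have := Nat.dvd_sub hd2 hd1
      rwa [show N + t - (N - t) = 2 * t by omega] at this
    have hq2 : ¬ q ∣ 2 := fun h => by
      have h1 := Nat.le_of_dvd (by norm_num) h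
      have h2 := hq.two_le
      omega
    have hqN : q ∣ N := ((Nat.Prime.dvd_mul hq).mp h2N).resolve_left hq2
    have hqt : q ∣ t := ((Nat.Prime.dvd_mul hq).mp h2t).resolve_left hq2
    rcases (Nat.Prime.dvd_mul hq).mp (hN ▸ hqN) with hqn | hqp
    · rcases hnfac with rfl | hf
      · have := Nat.le_of_dvd hn hqn
        have := hq.two_le
        omega
      · have := hf q hq hqn
        omega
    · have hqp' : q = p := (Nat.prime_dvd_prime_iff_eq hq hp).mp hqp
      subst hqp'
      have hqs : q ∣ s := hq.dvd_of_dvd_pow (hts ▸ hqt)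
      have hsq : q ≤ s := Nat.le_of_dvd (by positivity) hqs
      have : q ^ 2 ≤ t := by rw [hts]; nlinarith
      have : N < q ^ 2 := by rw [hN]; nlinarith [hq.two_le]
      omega
  rcases Nat.even_or_odd s with hse | hso
  · -- s even: t ≡ 0 mod 4, A = N - t
    obtain ⟨u, hu⟩ := hse
    have ht4 : t % 4 = 0 := by
      have : t = 4 * (u * u) := by rw [hts, hu]; ring
      omega
    have hA3 : (N - t) % 4 = 3 := by omega
    exact aux_descent (N - t) hA3 (N + t) x y (by omega) hfac
      (fun q h1 h2 h3 h4 => hkey q h1 h2 h3 h4)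
  · -- s odd: t ≡ 1 or 9 mod 16, use A = (N - t)/2, B = 2*(N + t)
    have hs2 : s % 2 = 1 := Nat.odd_iff.mp hso
    have ht16 : t % 16 = 1 ∨ t % 16 = 9 := by
      have h := Nat.pow_mod s 2 16
      have h16 : s % 16 = 1 ∨ s % 16 = 3 ∨ s % 16 = 5 ∨ s % 16 = 7 ∨ s % 16 = 9 ∨
          s % 16 = 11 ∨ s % 16 = 13 ∨ s % 16 = 15 := by omega
      rw [hts]
      rcases h16 with h' | h' | h' | h' | h' | h' | h' | h' <;> rw [h] <;> rw [h'] <;> norm_num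
    have hN16 : N % 16 = 7 ∨ N % 16 = 15 := by omega
    have h2d : 2 ∣ N - t := by omega
    have hA3 : (N - t) / 2 % 4 = 3 := by omega
    have hfac2 : x ^ 2 + y ^ 2 = (N - t) / 2 * (2 * (N + t)) := by
      obtain ⟨c, hc⟩ := h2d
      rw [hfac, hc, Nat.mul_div_cancel_left c (by norm_num)]; ring
    refine aux_descent ((N - t) / 2) hA3 (2 * (N + t)) x y (by omega) hfac2 ?_
    intro q h1 h2 h3 h4
    have hd1 : q ∣ N - t := h3.trans (Nat.div_dvd_of_dvd h2d)
    have hd2 : q ∣ N + t := by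
      rcases (Nat.Prime.dvd_mul h1).mp h4 with h | h
      · have := Nat.le_of_dvd (by norm_num) h
        have := h1.two_le
        omega
      · exact h
    exact hkey q h1 h2 hd1 hd2
end

section
/- Let p be a prime with p ≡ 7 (mod 8). Then there are no positive integers x, y, z with x² + y² + z⁴ = p². -/
/-!
Write `a = p - z²` and `b = p + z²`, so that `x² + y² = a * b`. Since `a + z² = p ≡ 7 (mod 8)` and no
sum of three squares is `≡ 7 (mod 8)`, `a` is not a sum of two squares, so some prime `q ≡ 3 (mod 4)`
divides `a` to an odd power. This `q` is neither `2` nor `p` (it is at most `a < p`), hence does not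
divide `a + b = 2p` and so not `b` either. Then `q` divides `x² + y² = a * b` to an odd power, which is
impossible for a sum of two squares.
-/

theorem Nat.sq_add_sq_add_sq_mod_eight_ne_seven (u v w : ℕ) : (u ^ 2 + v ^ 2 + w ^ 2) % 8 ≠ 7 := by
  have h : ∀ a b c : ZMod 8, a ^ 2 + b ^ 2 + c ^ 2 ≠ 7 := by decide
  intro huvw
  apply h u v w
  exact_mod_cast (ZMod.natCast_eq_natCast_iff' _ 7 8).mpr huvw

theorem Nat.even_padicValNat_of_mul_eq_sq_add_sq {a b x y q : ℕ} (hq : q.Prime) (hq3 : q % 4 = 3)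
    (hqb : ¬ q ∣ b) (h : a * b = x ^ 2 + y ^ 2) : Even (padicValNat q a) := by
  have : Fact q.Prime := ⟨hq⟩
  have hb : b ≠ 0 := by rintro rfl; exact hqb (dvd_zero q)
  rcases eq_or_ne a 0 with rfl | ha
  · simp
  by_cases hqa : q ∣ a
  swap
  · simp [padicValNat.eq_zero_of_not_dvd hqa]
  have hmem : q ∈ (a * b).primeFactors :=
    Nat.mem_primeFactors.mpr ⟨hq, dvd_mul_of_dvd_left hqa b, mul_ne_zero ha hb⟩
  have := Nat.eq_sq_add_sq_iff.mp ⟨x, y, h⟩ q hmem hq3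
  rwa [padicValNat.mul ha hb, padicValNat.eq_zero_of_not_dvd hqb, add_zero] at this

theorem Nat.Prime.not_dvd_two_mul {p q : ℕ} (hq : q.Prime) (hp : p.Prime) (hq2 : q ≠ 2)
    (hqp : q ≠ p) : ¬ q ∣ 2 * p := by
  rw [hq.dvd_mul, Nat.prime_dvd_prime_iff_eq hq Nat.prime_two, Nat.prime_dvd_prime_iff_eq hq hp]
  tauto

theorem no_rep_k4 (p : ℕ) (hp : p.Prime) (hp7 : p % 8 = 7) :
    ¬ ∃ x y z : ℕ, 0 < x ∧ 0 < y ∧ 0 < z ∧ x ^ 2 + y ^ 2 + z ^ 4 = p ^ 2 := by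
  rintro ⟨x, y, z, hx, -, hz, hsum⟩
  obtain ⟨a, ha⟩ : ∃ a, a + z ^ 2 = p := ⟨p - z ^ 2, Nat.sub_add_cancel (by nlinarith)⟩
  have hab : a * (p + z ^ 2) = x ^ 2 + y ^ 2 := by
    subst ha
    linear_combination hsum.symm
  have ha_not_sq_add_sq : ¬ ∃ u v, a = u ^ 2 + v ^ 2 := by
    rintro ⟨u, v, rfl⟩
    exact Nat.sq_add_sq_add_sq_mod_eight_ne_seven u v z (ha ▸ hp7)
  rw [Nat.eq_sq_add_sq_iff] at ha_not_sq_add_sq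
  push Not at ha_not_sq_add_sq
  obtain ⟨q, hqa, hq3, hodd⟩ := ha_not_sq_add_sq
  have hq := Nat.prime_of_mem_primeFactors hqa
  have hqp : q ≠ p := by
    have := Nat.le_of_mem_primeFactors hqa
    have := pow_pos hz 2
    omega
  have hqb : ¬ q ∣ p + z ^ 2 := by
    intro hqb
    apply hq.not_dvd_two_mul hp (by omega) hqp
    rw [show 2 * p = a + (p + z ^ 2) by omega]
    exact dvd_add (Nat.dvd_of_mem_primeFactors hqa) hqb
  exact hodd (Nat.even_padicValNat_of_mul_eq_sq_add_sq hq hq3 hqb hab)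
end

section
/- Let k ≥ 3 be odd and let p be a prime with p ≡ 1 (mod 4k). Then for every prime q there exists an integer z with z ≡ 2k (mod 4k) and integers x, y such that x² + y² + z^k ≡ p^k (mod q^m) for every m ≥ 1; i.e., there is no congruence obstruction to representing p^k as x² + y² + z^k with z ≡ 2k (mod 4k). -/
/-!
A solution in the `q`-adic integers reduces to a solution modulo every `q ^ m`, so it suffices
to choose `z` with `p ^ k - z ^ k` a sum of two squares in `ℤ_[q]`; Hensel's lemma turns this
into a congruence condition. For `q = 2` take `z = 2k`: then `p ^ k - z ^ k ≡ 1 (mod 4)`, so it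
or its difference with `2 ^ 2` is `≡ 1 (mod 8)`, hence a `2`-adic square. For odd `q` choose
`z ≡ 2k (mod 4k)` with `q ∤ p ^ k - z ^ k`; a unit modulo `q` is a sum of two squares with a
nonzero summand, and that summand lifts.
-/

open Polynomial

theorem Int.exists_sq_add_sq_modEq_of_zmod {n : ℕ} {c : ℤ} {a b : ZMod n}
    (h : a ^ 2 + b ^ 2 = c) : ∃ x y : ℤ, x ^ 2 + y ^ 2 ≡ c [ZMOD n] := by
  refine ⟨a.cast, b.cast, ?_⟩
  rw [← ZMod.intCast_eq_intCast_iff]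
  push_cast
  exact h

theorem Int.exists_sq_add_sq_modEq_of_not_dvd {q : ℕ} [Fact q.Prime] {c : ℤ}
    (hc : ¬ (q : ℤ) ∣ c) : ∃ x y : ℤ, ¬ (q : ℤ) ∣ x ∧ x ^ 2 + y ^ 2 ≡ c [ZMOD q] := by
  obtain ⟨a, b, hab⟩ := ZMod.sq_add_sq q c
  have of_ne_zero : ∀ a b : ZMod q, a ^ 2 + b ^ 2 = c → a ≠ 0 →
      ∃ x y : ℤ, ¬ (q : ℤ) ∣ x ∧ x ^ 2 + y ^ 2 ≡ c [ZMOD q] := fun a b hab ha ↦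
    ⟨a.cast, b.cast, by rwa [← ZMod.intCast_zmod_eq_zero_iff_dvd, ZMod.intCast_zmod_cast], by
      rw [← ZMod.intCast_eq_intCast_iff]; push_cast; exact hab⟩
  by_cases ha : a = 0
  · refine of_ne_zero b a (by rw [← hab]; ring) fun hb ↦ hc ?_
    rw [← ZMod.intCast_zmod_eq_zero_iff_dvd, ← hab, ha, hb]
    ring
  · exact of_ne_zero a b hab ha

theorem Int.exists_modEq_and_modEq_of_isCoprime {a b : ℤ} (h : IsCoprime a b) (r s : ℤ) :
    ∃ z, z ≡ r [ZMOD a] ∧ z ≡ s [ZMOD b] := by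
  obtain ⟨u, v, huv⟩ := h
  refine ⟨r + a * u * (s - r), Int.modEq_iff_dvd.2 ⟨-u * (s - r), by ring⟩,
    Int.modEq_iff_dvd.2 ⟨v * (s - r), by linear_combination -(s - r) * huv⟩⟩

theorem Prime.not_dvd_pow_sub_pow {R : Type*} [CommRing R] {q a b : R} (hq : Prime q)
    {k : ℕ} (hk : k ≠ 0) (ha : ¬ q ∣ a) (hb : q ∣ b) : ¬ q ∣ a ^ k - b ^ k := fun h ↦
  ha (hq.dvd_of_dvd_pow (by simpa using dvd_add h (dvd_pow hb hk)))

theorem Int.pow_sub_pow_modEq_one {p z : ℤ} {k : ℕ} (hk : 2 ≤ k) (hp : p ≡ 1 [ZMOD 4])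
    (hz : 2 ∣ z) : p ^ k - z ^ k ≡ 1 [ZMOD 4] := by
  have hzk : z ^ k ≡ 0 [ZMOD 4] :=
    Int.modEq_zero_iff_dvd.2 ((pow_dvd_pow_of_dvd hz 2).trans (pow_dvd_pow z hk))
  simpa using (hp.pow k).sub hzk

theorem Nat.Prime.not_intCast_dvd_two {q : ℕ} (hq : q.Prime) (hq2 : q ≠ 2) : ¬ (q : ℤ) ∣ 2 :=
  fun h ↦ hq2 ((Nat.prime_dvd_prime_iff_eq hq Nat.prime_two).1 (by exact_mod_cast h))

namespace PadicInt

variable {q : ℕ} [Fact q.Prime]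

theorem isSquare_of_norm_sq_sub_lt {x d : ℤ_[q]} (h : ‖x ^ 2 - d‖ < ‖2 * x‖ ^ 2) :
    IsSquare d := by
  have hF : (X ^ 2 - C d).aeval x = x ^ 2 - d := by simp
  have hF' : (derivative (X ^ 2 - C d)).aeval x = 2 * x := by simp [one_add_one_eq_two]
  obtain ⟨z, hz, -⟩ := hensels_lemma (F := X ^ 2 - C d) (a := x) (by rwa [hF, hF'])
  exact ⟨z, by simp at hz; linear_combination -hz⟩

theorem isSquare_intCast_of_sq_modEq {x d : ℤ} (hq : q ≠ 2) (hx : ¬ (q : ℤ) ∣ x)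
    (hxd : x ^ 2 ≡ d [ZMOD q]) : IsSquare (d : ℤ_[q]) := by
  have h2x : ¬ (q : ℤ) ∣ 2 * x := by
    rw [(Nat.prime_iff_prime_int.mp Fact.out).dvd_mul, not_or]
    exact ⟨(Fact.out : q.Prime).not_intCast_dvd_two hq, hx⟩
  apply isSquare_of_norm_sq_sub_lt (x := (x : ℤ_[q]))
  have h1 : ‖((x ^ 2 - d : ℤ) : ℤ_[q])‖ < 1 :=
    (norm_int_lt_one_iff_dvd _).2 (by simpa using hxd.symm.dvd)
  have h2 : ‖((2 * x : ℤ) : ℤ_[q])‖ = 1 :=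
    le_antisymm (norm_le_one _) (not_lt.1 (mt (norm_int_lt_one_iff_dvd _).1 h2x))
  push_cast at h1 h2
  rwa [h2, one_pow]

theorem isSquare_intCast_of_modEq_one_eight {d : ℤ} (hd : d ≡ 1 [ZMOD 8]) :
    IsSquare (d : ℤ_[2]) := by
  apply isSquare_of_norm_sq_sub_lt (x := 1)
  have h1 : ‖((1 - d : ℤ) : ℤ_[2])‖ ≤ (2 : ℝ) ^ (-3 : ℤ) :=
    norm_int_le_pow_iff_dvd.2 hd.dvd
  have h2 : ‖(2 : ℤ_[2])‖ = 2⁻¹ := by exact_mod_cast norm_p (p := 2)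
  push_cast at h1
  rw [one_pow, mul_one, h2]
  exact h1.trans_lt (by norm_num)

theorem exists_sq_add_sq_eq_of_isSquare_sub {c y : ℤ}
    (h : IsSquare ((c - y ^ 2 : ℤ) : ℤ_[q])) :
    ∃ a b : ℤ_[q], a ^ 2 + b ^ 2 = c := by
  obtain ⟨r, hr⟩ := h
  exact ⟨r, y, by push_cast at hr; linear_combination -hr⟩

theorem exists_sq_add_sq_eq_of_not_dvd (hq : q ≠ 2) {c : ℤ} (hc : ¬ (q : ℤ) ∣ c) :
    ∃ a b : ℤ_[q], a ^ 2 + b ^ 2 = c := by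
  obtain ⟨x, y, hx, hxy⟩ := Int.exists_sq_add_sq_modEq_of_not_dvd (q := q) hc
  refine exists_sq_add_sq_eq_of_isSquare_sub (y := y) (isSquare_intCast_of_sq_modEq hq hx ?_)
  have := hxy.sub_right (y ^ 2)
  rwa [add_sub_cancel_right] at this

theorem exists_sq_add_sq_eq_of_modEq_one_four {c : ℤ} (hc : c ≡ 1 [ZMOD 4]) :
    ∃ a b : ℤ_[2], a ^ 2 + b ^ 2 = c := by
  have h8 : c ≡ 1 [ZMOD 8] ∨ c - 2 ^ 2 ≡ 1 [ZMOD 8] := by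
    simp only [Int.ModEq] at hc ⊢
    omega
  rcases h8 with h1 | h5
  · exact exists_sq_add_sq_eq_of_isSquare_sub (y := 0)
      (by simpa using isSquare_intCast_of_modEq_one_eight h1)
  · exact exists_sq_add_sq_eq_of_isSquare_sub (isSquare_intCast_of_modEq_one_eight h5)

theorem exists_sq_add_sq_modEq_pow {c : ℤ} {a b : ℤ_[q]} (h : a ^ 2 + b ^ 2 = c) (m : ℕ) :
    ∃ x y : ℤ, x ^ 2 + y ^ 2 ≡ c [ZMOD q ^ m] := by
  have hm : toZModPow m a ^ 2 + toZModPow m b ^ 2 = c := by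
    rw [← map_pow, ← map_pow, ← map_add, h, map_intCast]
  exact_mod_cast Int.exists_sq_add_sq_modEq_of_zmod hm

end PadicInt

theorem exists_modEq_not_dvd_pow_sub_pow {q : ℕ} (hq : q.Prime) (hq2 : q ≠ 2) {k : ℕ}
    (hk : k ≠ 0) {p : ℤ} (hp : p ≡ 1 [ZMOD 4 * k]) :
    ∃ z : ℤ, z ≡ 2 * k [ZMOD 4 * k] ∧ ¬ (q : ℤ) ∣ p ^ k - z ^ k := by
  have hqZ : Prime (q : ℤ) := Nat.prime_iff_prime_int.mp hq
  -- `z` is chosen so that exactly one of `p`, `z` is divisible by `q`.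
  by_cases hqk : (q : ℤ) ∣ k
  · refine ⟨2 * k, Int.ModEq.refl _, hqZ.not_dvd_pow_sub_pow hk ?_ (hqk.mul_left 2)⟩
    have hpq : p ≡ 1 [ZMOD q] := hp.of_dvd (hqk.mul_left 4)
    exact hpq.dvd_iff.not.2 hqZ.not_dvd_one
  · have hcop : IsCoprime (4 * k : ℤ) q := by
      refine (hqZ.coprime_iff_not_dvd.2 ?_).symm
      rw [hqZ.dvd_mul, not_or, show (4 : ℤ) = 2 ^ 2 by norm_num]
      exact ⟨mt hqZ.dvd_of_dvd_pow (hq.not_intCast_dvd_two hq2), hqk⟩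
    by_cases hqp : (q : ℤ) ∣ p
    · obtain ⟨z, hz, hzq⟩ := Int.exists_modEq_and_modEq_of_isCoprime hcop (2 * k) 1
      refine ⟨z, hz, fun h ↦ hqZ.not_dvd_pow_sub_pow hk ?_ hqp (dvd_sub_comm.1 h)⟩
      exact hzq.dvd_iff.not.2 hqZ.not_dvd_one
    · obtain ⟨z, hz, hzq⟩ := Int.exists_modEq_and_modEq_of_isCoprime hcop (2 * k) 0
      exact ⟨z, hz, hqZ.not_dvd_pow_sub_pow hk hqp (Int.modEq_zero_iff_dvd.1 hzq)⟩

theorem no_congruence_obstruction_general (k : ℕ) (hk3 : 3 ≤ k) (p : ℕ)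
    (hp1 : (p : ℤ) ≡ 1 [ZMOD (4 * k)]) :
    ∀ q : ℕ, q.Prime → ∃ z : ℤ, z ≡ 2 * k [ZMOD (4 * k)] ∧
      ∀ m : ℕ, 1 ≤ m → ∃ x y : ℤ,
        x ^ 2 + y ^ 2 + z ^ k ≡ (p : ℤ) ^ k [ZMOD ((q : ℤ) ^ m)] := by
  intro q hq
  have := Fact.mk hq
  suffices h : ∃ z : ℤ, z ≡ 2 * k [ZMOD 4 * k] ∧
      ∃ a b : ℤ_[q], a ^ 2 + b ^ 2 = (p ^ k - z ^ k : ℤ) by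
    obtain ⟨z, hz, a, b, hab⟩ := h
    refine ⟨z, hz, fun m _ ↦ ?_⟩
    obtain ⟨x, y, hxy⟩ := PadicInt.exists_sq_add_sq_modEq_pow hab m
    exact ⟨x, y, by simpa using hxy.add_right (z ^ k)⟩
  rcases eq_or_ne q 2 with rfl | hq2
  · refine ⟨2 * k, Int.ModEq.refl _, PadicInt.exists_sq_add_sq_eq_of_modEq_one_four ?_⟩
    exact Int.pow_sub_pow_modEq_one (by omega) (hp1.of_dvd ⟨k, rfl⟩) (dvd_mul_right 2 _)
  · obtain ⟨z, hz, hdvd⟩ := exists_modEq_not_dvd_pow_sub_pow hq hq2 (by omega) hp1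
    exact ⟨z, hz, PadicInt.exists_sq_add_sq_eq_of_not_dvd hq2 hdvd⟩

theorem no_congruence_obstruction (k : ℕ) (hk : Odd k) (hk3 : 3 ≤ k) (p : ℕ) (hp : p.Prime)
    (hp1 : (p : ℤ) ≡ 1 [ZMOD (4 * k)]) :
    ∀ q : ℕ, q.Prime → ∃ z : ℤ, z ≡ 2 * k [ZMOD (4 * k)] ∧
      ∀ m : ℕ, 1 ≤ m → ∃ x y : ℤ,
        x ^ 2 + y ^ 2 + z ^ k ≡ (p : ℤ) ^ k [ZMOD ((q : ℤ) ^ m)] :=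
  no_congruence_obstruction_general k hk3 p hp1
end

section
/- There are infinitely many positive integers N that are not representable as x² + y² + z⁴ with positive integers x, y, z; in fact, p² is not so representable for every prime p ≡ 7 (mod 8). -/
/-! If `x² + y² + z⁴ = p²`, then `x² + y² = (p - z²)(p + z²)`. Since `p ≡ 7 (mod 8)` and
`z² ≡ 0, 4` or `1 (mod 8)`, the odd part `m` of `p - z²` is `≡ 3 (mod 4)`, and it is coprime to
the cofactor: a common prime divisor would divide `4p` yet be smaller than `p`. A coprime factor
of a sum of two squares is again a sum of two squares, which `m ≡ 3 (mod 4)` is not. Dirichlet's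
theorem supplies infinitely many such primes `p`. -/

theorem Nat.not_exists_sq_add_sq_of_mod_four_eq_three {n : ℕ} (hn : n % 4 = 3) :
    ¬ ∃ x y, n = x ^ 2 + y ^ 2 := by
  rintro ⟨x, y, rfl⟩
  have hcast := (ZMod.natCast_eq_natCast_iff' (x ^ 2 + y ^ 2) 3 4).mpr hn
  push_cast at hcast
  have key : ∀ u v : ZMod 4, u ^ 2 + v ^ 2 ≠ 3 := by decide
  exact key x y hcast

theorem Nat.sq_mod_eight_eq_one_of_odd {z : ℕ} (hz : Odd z) : z ^ 2 % 8 = 1 := by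
  have h2 : z % 2 = 1 := Nat.odd_iff.mp hz
  have h8 : z % 8 < 8 := Nat.mod_lt z (by norm_num)
  rw [Nat.pow_mod]
  interval_cases h : z % 8 <;> omega

theorem Nat.eq_sq_add_sq_of_mul_of_coprime {m n : ℕ} (hmn : m.Coprime n)
    (h : ∃ x y, m * n = x ^ 2 + y ^ 2) : ∃ x y, m = x ^ 2 + y ^ 2 := by
  rw [Nat.eq_sq_add_sq_iff] at h ⊢
  intro q hq' hq4
  obtain ⟨hq, hqm, hm⟩ := Nat.mem_primeFactors.mp hq'
  have : Fact q.Prime := ⟨hq⟩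
  have hn : n ≠ 0 := by
    rintro rfl
    rw [Nat.coprime_zero_right] at hmn
    exact hq.not_dvd_one (hmn ▸ hqm)
  have hqn : ¬ q ∣ n := fun hqn => hq.one_lt.ne' (Nat.eq_one_of_dvd_coprimes hmn hqm hqn)
  have hmul := h q (hq.mem_primeFactors (dvd_mul_of_dvd_left hqm n) (mul_ne_zero hm hn)) hq4
  rwa [padicValNat.mul hm hn, padicValNat.eq_zero_of_not_dvd hqn, add_zero] at hmul

theorem Nat.coprime_of_mul_add_eq_two_pow_mul_prime {m n c e p : ℕ} (hp : p.Prime)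
    (hm : Odd m) (hmp : m < p) (h : c * m + n = 2 ^ e * p) : m.Coprime n := by
  apply Nat.coprime_of_dvd
  intro q hq hqm hqn
  have hq2 : q ≠ 2 := by
    rintro rfl
    exact Nat.not_even_iff_odd.mpr hm (even_iff_two_dvd.mpr hqm)
  have hq2p : q ∣ 2 ^ e * p := h ▸ dvd_add (dvd_mul_of_dvd_right hqm c) hqn
  have hqp : q ∣ p := ((Nat.coprime_primes hq Nat.prime_two).mpr hq2).pow_right e
    |>.dvd_of_dvd_mul_left hq2p
  have := Nat.le_of_dvd hm.pos hqm
  have := (Nat.prime_dvd_prime_iff_eq hq hp).mp hqp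
  omega

theorem exists_coprime_mul_eq_of_prime_mod_eight {p z a : ℕ} (hp : p.Prime) (hp8 : p % 8 = 7)
    (hz : 0 < z) (ha : p = z ^ 2 + a) :
    ∃ m n, m % 4 = 3 ∧ m.Coprime n ∧ m * n = a * (a + 2 * z ^ 2) := by
  have hap : a < p := by have := pow_pos hz 2; omega
  rcases Nat.even_or_odd z with ⟨t, rfl⟩ | hodd
  · have hz2 : (t + t) ^ 2 = 4 * t ^ 2 := by ring
    refine ⟨a, a + 2 * (t + t) ^ 2, by omega, ?_, rfl⟩
    exact Nat.coprime_of_mul_add_eq_two_pow_mul_prime (c := 1) (e := 1) hp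
      (Nat.odd_iff.mpr (by omega)) hap (by omega)
  · have hz2 := Nat.sq_mod_eight_eq_one_of_odd hodd
    obtain ⟨m, rfl⟩ : 2 ∣ a := by omega
    refine ⟨m, 2 * (2 * m + 2 * z ^ 2), by omega, ?_, by ring⟩
    exact Nat.coprime_of_mul_add_eq_two_pow_mul_prime (c := 4) (e := 2) hp
      (Nat.odd_iff.mpr (by omega)) (by omega) (by omega)

theorem not_exists_sq_add_sq_add_pow_four_eq_sq_of_prime_mod_eight {p : ℕ} (hp : p.Prime)
    (hp8 : p % 8 = 7) :
    ¬ ∃ x y z : ℕ, 0 < x ∧ 0 < y ∧ 0 < z ∧ x ^ 2 + y ^ 2 + z ^ 4 = p ^ 2 := by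
  rintro ⟨x, y, z, hx, -, hz, h⟩
  have hzp : z ^ 2 < p := by
    have : (z ^ 2) ^ 2 < p ^ 2 := by nlinarith [pow_pos hx 2]
    exact lt_of_pow_lt_pow_left₀ 2 hp.pos.le this
  obtain ⟨a, ha⟩ := Nat.exists_eq_add_of_le hzp.le
  obtain ⟨m, n, hm4, hmn, hmna⟩ := exists_coprime_mul_eq_of_prime_mod_eight hp hp8 hz ha
  have hsum : m * n = x ^ 2 + y ^ 2 := by
    subst ha
    nlinarith
  exact Nat.not_exists_sq_add_sq_of_mod_four_eq_three hm4
    (Nat.eq_sq_add_sq_of_mul_of_coprime hmn ⟨x, y, hsum⟩)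

theorem infinitely_many_not_rep_k4 :
    {N : ℕ | ¬ ∃ x y z : ℕ, 0 < x ∧ 0 < y ∧ 0 < z ∧ x ^ 2 + y ^ 2 + z ^ 4 = N}.Infinite ∧
    ∀ p : ℕ, p.Prime → p % 8 = 7 →
      ¬ ∃ x y z : ℕ, 0 < x ∧ 0 < y ∧ 0 < z ∧ x ^ 2 + y ^ 2 + z ^ 4 = p ^ 2 := by
  refine ⟨?_, fun _ => not_exists_sq_add_sq_add_pow_four_eq_sq_of_prime_mod_eight⟩
  have hdirichlet : {p : ℕ | p.Prime ∧ (p : ZMod 8) = 7}.Infinite :=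
    Nat.infinite_setOfPred_prime_and_eq_mod (by decide)
  refine (hdirichlet.image (Nat.pow_left_injective two_ne_zero).injOn).mono ?_
  rintro _ ⟨p, ⟨hp, hp8⟩, rfl⟩
  exact not_exists_sq_add_sq_add_pow_four_eq_sq_of_prime_mod_eight hp
    (by rw [← ZMod.val_natCast, hp8]; rfl)
end

section
/- Let k ≥ 3 be odd. There exist infinitely many positive integers N (namely N = p^k for primes p ≡ 1 (mod 4k)) such that the equation x² + y² + z^k = N has no integer solution with z ≡ 2k (mod 4k). -/
/-!
If `x² + y² = p^k - z^k` with `z ≡ 2k (mod 4k)`, then `p^k - z^k` is odd, hence positive, so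
`B = p - z` is positive (as `k` is odd) and `B ≡ 3 (mod 4)`. Hence some prime `q ≡ 3 (mod 4)`
divides `B` to an odd power. As `q ≠ p` and `B ≡ 1 (mod k)`, lifting the exponent gives
`v_q(p^k - z^k) = v_q(B) + v_q(k) = v_q(B)`, which is odd: impossible for a sum of two squares.
-/

theorem padicValInt.pow_sub_pow {q : ℕ} [Fact q.Prime] (hq : Odd q) {a z : ℤ} {k : ℕ}
    (hqaz : (q : ℤ) ∣ a - z) (hqa : ¬(q : ℤ) ∣ a) (hk : a ^ k ≠ z ^ k) :
    padicValInt q (a ^ k - z ^ k) = padicValInt q (a - z) + padicValNat q k := by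
  have hk0 : k ≠ 0 := by rintro rfl; simp at hk
  have haz : a - z ≠ 0 := by rintro h; rw [sub_eq_zero.mp h] at hk; exact hk rfl
  rw [← Nat.cast_inj (R := ℕ∞), Nat.cast_add, padicValInt, padicValInt,
    padicValNat_eq_emultiplicity (Int.natAbs_ne_zero.mpr (sub_ne_zero.mpr hk)),
    padicValNat_eq_emultiplicity (Int.natAbs_ne_zero.mpr haz), padicValNat_eq_emultiplicity hk0,
    Int.emultiplicity_natAbs, Int.emultiplicity_natAbs]
  exact Int.emultiplicity_pow_sub_pow Fact.out hq hqaz hqa k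

theorem even_padicValInt_sq_add_sq {q : ℕ} (hq : q.Prime) (hq3 : q % 4 = 3) (x y : ℤ) :
    Even (padicValInt q (x ^ 2 + y ^ 2)) := by
  have hsq : (x ^ 2 + y ^ 2).natAbs = x.natAbs ^ 2 + y.natAbs ^ 2 := by
    zify; rw [abs_of_nonneg (by positivity), sq_abs, sq_abs]
  rw [padicValInt, hsq]
  by_cases hmem : q ∈ (x.natAbs ^ 2 + y.natAbs ^ 2).primeFactors
  · exact Nat.eq_sq_add_sq_iff.mp ⟨_, _, rfl⟩ q hmem hq3
  · rw [Nat.mem_primeFactors, not_and, not_and, not_not] at hmem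
    rw [padicValNat.eq_zero_iff.mpr (by tauto)]
    exact Even.zero

theorem exists_prime_mod_four_eq_three_odd_padicValInt {B : ℤ} (hB0 : 0 ≤ B)
    (hB : B ≡ 3 [ZMOD 4]) : ∃ q : ℕ, q.Prime ∧ q % 4 = 3 ∧ Odd (padicValInt q B) := by
  lift B to ℕ using hB0
  by_contra! h
  obtain ⟨x, y, rfl⟩ := Nat.eq_sq_add_sq_iff.mpr fun q hq hq3 ↦
    Nat.not_odd_iff_even.mp (h q (Nat.prime_of_mem_primeFactors hq) hq3)
  have h3 := (ZMod.intCast_eq_intCast_iff _ _ 4).mpr hB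
  push_cast at h3
  exact (by decide : ∀ u v : ZMod 4, u ^ 2 + v ^ 2 ≠ 3) _ _ h3

theorem sq_add_sq_ne_pow_sub_pow {k : ℕ} (hk : Odd k) {a z : ℤ}
    (ha : a ≡ 1 [ZMOD 4 * k]) (hz : z ≡ 2 * k [ZMOD 4 * k])
    (haq : ∀ q : ℕ, q.Prime → q % 4 = 3 → ¬(q : ℤ) ∣ a) (x y : ℤ) :
    x ^ 2 + y ^ 2 ≠ a ^ k - z ^ k := by
  intro h
  have ha4 : a ≡ 1 [ZMOD 4] := ha.of_mul_right _
  have hz4 : z ≡ 2 [ZMOD 4] := by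
    obtain ⟨j, hj⟩ := hk
    exact (hz.of_mul_right _).trans (Int.modEq_iff_dvd.mpr ⟨-j, by rw [hj]; push_cast; ring⟩)
  have haz : a - z ≡ 1 [ZMOD k] := by
    simpa using (ha.of_mul_left 4).sub
      ((hz.of_mul_left 4).trans (Int.modEq_zero_iff_dvd.mpr (dvd_mul_left _ _)))
  have hodd_sub : Odd (a ^ k - z ^ k) := by
    have hodd : Odd a := Int.odd_iff.mpr (by have : a % 4 = 1 := ha4; omega)
    have heven : Even z := Int.even_iff.mpr (by have : z % 4 = 2 := hz4; omega)
    exact (hodd.pow).sub_even (heven.pow_of_ne_zero hk.pos.ne')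
  have hpos : 0 < a ^ k - z ^ k :=
    (h ▸ by positivity : 0 ≤ a ^ k - z ^ k).lt_of_ne' fun h0 ↦ by simp [h0] at hodd_sub
  have hza : z < a := hk.strictMono_pow.lt_iff_lt.mp (sub_pos.mp hpos)
  obtain ⟨q, hq, hq3, hodd⟩ := exists_prime_mod_four_eq_three_odd_padicValInt
    (sub_nonneg.mpr hza.le) ((ha4.sub hz4).trans (by decide))
  have := Fact.mk hq
  have hqaz : (q : ℤ) ∣ a - z := by
    by_contra hnd
    rw [padicValInt.eq_zero_of_not_dvd hnd] at hodd
    exact Nat.not_odd_zero hodd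
  have hqk : ¬q ∣ k := by
    intro hqk
    have h1 : (q : ℤ) ∣ 1 - (a - z) := (haz.of_dvd (Int.natCast_dvd_natCast.mpr hqk)).dvd
    exact hq.not_dvd_one (Int.natCast_dvd_natCast.mp (by simpa using dvd_add h1 hqaz))
  have hv := padicValInt.pow_sub_pow (hq.odd_of_ne_two (by omega)) hqaz (haq q hq hq3)
    (sub_ne_zero.mp hpos.ne')
  rw [padicValNat.eq_zero_of_not_dvd hqk, add_zero, ← h] at hv
  exact Nat.not_even_iff_odd.mpr hodd (hv ▸ even_padicValInt_sq_add_sq hq hq3 x y)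

theorem not_exists_sq_add_sq_add_pow_eq_prime_pow {k p : ℕ} (hk : Odd k) (hp : p.Prime)
    (hp1 : (p : ℤ) ≡ 1 [ZMOD 4 * k]) :
    ¬∃ x y z : ℤ, z ≡ 2 * k [ZMOD 4 * k] ∧ x ^ 2 + y ^ 2 + z ^ k = (p : ℤ) ^ k := by
  rintro ⟨x, y, z, hz, h⟩
  refine sq_add_sq_ne_pow_sub_pow hk hp1 hz (fun q hq hq3 hqp ↦ ?_) x y (by linarith)
  obtain rfl : q = p := (Nat.prime_dvd_prime_iff_eq hq hp).mp (Int.natCast_dvd_natCast.mp hqp)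
  have : (q : ℤ) % 4 = 1 := hp1.of_mul_right _
  omega

theorem infinitely_many_not_rep_odd_k_general (k : ℕ) (hk : Odd k) :
    {N : ℕ | 0 < N ∧ ¬ ∃ x y z : ℤ, z ≡ 2 * k [ZMOD (4 * k)] ∧
        x ^ 2 + y ^ 2 + z ^ k = (N : ℤ)}.Infinite ∧
    ∀ p : ℕ, p.Prime → (p : ℤ) ≡ 1 [ZMOD (4 * k)] →
      ¬ ∃ x y z : ℤ, z ≡ 2 * k [ZMOD (4 * k)] ∧ x ^ 2 + y ^ 2 + z ^ k = (p : ℤ) ^ k := by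
  refine ⟨?_, fun p hp hp1 ↦ not_exists_sq_add_sq_add_pow_eq_prime_pow hk hp hp1⟩
  have hprimes := Nat.infinite_setOfPred_prime_modEq_one (mul_ne_zero four_ne_zero hk.pos.ne')
  refine (hprimes.image (Nat.pow_left_injective hk.pos.ne').injOn).mono ?_
  rintro _ ⟨p, ⟨hp, hp1⟩, rfl⟩
  refine ⟨pow_pos hp.pos k, ?_⟩
  push_cast
  exact not_exists_sq_add_sq_add_pow_eq_prime_pow hk hp
    (by exact_mod_cast Int.natCast_modEq_iff.mpr hp1)

theorem infinitely_many_not_rep_odd_k (k : ℕ) (hk : Odd k) (hk3 : 3 ≤ k) :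
    {N : ℕ | 0 < N ∧ ¬ ∃ x y z : ℤ, z ≡ 2 * k [ZMOD (4 * k)] ∧
        x ^ 2 + y ^ 2 + z ^ k = (N : ℤ)}.Infinite ∧
    ∀ p : ℕ, p.Prime → (p : ℤ) ≡ 1 [ZMOD (4 * k)] →
      ¬ ∃ x y z : ℤ, z ≡ 2 * k [ZMOD (4 * k)] ∧ x ^ 2 + y ^ 2 + z ^ k = (p : ℤ) ^ k :=
  infinitely_many_not_rep_odd_k_general k hk
end
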